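/- Let φ: ℝ → [0,∞) be continuous and coercive (φ(t) → ∞ as |t| → ∞), let Y be a real random variable and X a random vector in ℝ^p satisfying the identifiability condition that P(νᵀX = 0) = 1 implies ν = 0. Then the function g(θ) = E[φ(Y − θᵀX)] is coercive: for any sequence θ_m with ‖θ_m‖ → ∞, g(θ_m) → ∞. -/

import Mathlib

open MeasureTheory Filter
open scoped ENNReal NNReal

lemma coer_aux (φ : ℝ → ℝ) (hφcoer : Tendsto φ (Filter.cocompact ℝ) atTop) (M : ℝ) :
    ∃ T : ℝ, ∀ t : ℝ, T < |t| → M ≤ φ t := by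
  have h : {t : ℝ | M ≤ φ t} ∈ Filter.cocompact ℝ :=
    hφcoer.eventually (eventually_ge_atTop M)
  rw [Filter.mem_cocompact] at h
  obtain ⟨s, hs, hsub⟩ := h
  obtain ⟨T, hT⟩ := hs.isBounded.subset_closedBall 0
  refine ⟨T, fun t ht => ?_⟩
  refine hsub fun hts => ?_
  have := hT hts
  rw [Metric.mem_closedBall, Real.dist_eq, sub_zero] at this
  linarith

/-- Coercivity of the population robust-regression loss
`g(θ) = E[φ(Y − θᵀX)]` under the identifiability condition. -/
theorem stmt_12 (p : ℕ) (Ω : Type*) [MeasurableSpace Ω] (P : Measure Ω)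
    [IsProbabilityMeasure P]
    (φ : ℝ → ℝ) (hφcont : Continuous φ) (hφ0 : ∀ t, 0 ≤ φ t)
    (hφcoer : Tendsto φ (Filter.cocompact ℝ) atTop)
    (Y : Ω → ℝ) (hY : Measurable Y)
    (X : Ω → EuclideanSpace ℝ (Fin p)) (hX : Measurable X)
    (hid : ∀ ν : EuclideanSpace ℝ (Fin p),
      P {ω | (inner ℝ ν (X ω) : ℝ) = 0} = 1 → ν = 0) :
    ∀ θs : ℕ → EuclideanSpace ℝ (Fin p),
      Tendsto (fun m => ‖θs m‖) atTop atTop →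
      Tendsto (fun m => ∫⁻ ω, ENNReal.ofReal (φ (Y ω - (inner ℝ (θs m) (X ω) : ℝ))) ∂P)
        atTop (nhds ⊤) := by
  intro θs hθ
  rw [ENNReal.tendsto_nhds_top_iff_nnreal]
  by_contra hcon
  push_neg at hcon
  obtain ⟨K, hK⟩ := hcon
  simp only [← not_lt] at hK
  have h1 : ∀ᶠ m in atTop, (1:ℝ) ≤ ‖θs m‖ := hθ.eventually_ge_atTop 1
  have hfreq := hK.and_eventually h1
  obtain ⟨ψ, hψmono, hψ⟩ := Filter.extraction_of_frequently_atTop hfreq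
  set u : ℕ → EuclideanSpace ℝ (Fin p) := fun n => ‖θs (ψ n)‖⁻¹ • θs (ψ n) with hu
  have hupos : ∀ n, (0:ℝ) < ‖θs (ψ n)‖ := fun n => lt_of_lt_of_le one_pos (hψ n).2
  have hunorm : ∀ n, ‖u n‖ = 1 := by
    intro n
    rw [hu, norm_smul, norm_inv, norm_norm, inv_mul_cancel₀ (hupos n).ne']
  have husphere : ∀ n, u n ∈ Metric.sphere (0 : EuclideanSpace ℝ (Fin p)) 1 := by
    intro n; simpa [mem_sphere_iff_norm] using hunorm n
  obtain ⟨v, hvmem, σ, hσmono, hσ⟩ :=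
    (isCompact_sphere (0 : EuclideanSpace ℝ (Fin p)) 1).tendsto_subseq husphere
  have hvnorm : ‖v‖ = 1 := by simpa [mem_sphere_iff_norm] using hvmem
  have hvne : v ≠ 0 := by
    intro h; rw [h, norm_zero] at hvnorm; norm_num at hvnorm
  -- the inner product with v is measurable
  have hf : Measurable fun ω => (inner ℝ v (X ω) : ℝ) :=
    ((continuous_const.inner continuous_id).measurable).comp hX
  -- positive-measure event
  set B : ℕ → Set Ω := fun k =>
    {ω | 1/((k:ℝ)+1) ≤ |(inner ℝ v (X ω) : ℝ)|} ∩ {ω | ‖X ω‖ ≤ (k:ℝ)} ∩ {ω | |Y ω| ≤ (k:ℝ)}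
    with hB
  have hScompl : P {ω | (inner ℝ v (X ω) : ℝ) ≠ 0} ≠ 0 := by
    intro h0
    have hSmeas : MeasurableSet {ω | (inner ℝ v (X ω) : ℝ) = 0} :=
      hf (measurableSet_singleton 0)
    have : P {ω | (inner ℝ v (X ω) : ℝ) = 0} = 1 := by
      rw [← prob_compl_eq_zero_iff hSmeas]
      exact h0
    exact hvne (hid v this)
  have hsub : {ω | (inner ℝ v (X ω) : ℝ) ≠ 0} ⊆ ⋃ k, B k := by
    intro ω hω
    have habs : 0 < |(inner ℝ v (X ω) : ℝ)| := abs_pos.2 hω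
    obtain ⟨k1, hk1⟩ := exists_nat_ge (1/|(inner ℝ v (X ω) : ℝ)|)
    obtain ⟨k2, hk2⟩ := exists_nat_ge ‖X ω‖
    obtain ⟨k3, hk3⟩ := exists_nat_ge |Y ω|
    refine Set.mem_iUnion.2 ⟨k1 + k2 + k3, ⟨⟨?_, ?_⟩, ?_⟩⟩
    · have h1 : 1/|(inner ℝ v (X ω) : ℝ)| ≤ ((k1 + k2 + k3 : ℕ):ℝ) + 1 := by
        have : (k1:ℝ) ≤ ((k1 + k2 + k3 : ℕ):ℝ) := by push_cast; linarith [Nat.cast_nonneg (α := ℝ) k2, Nat.cast_nonneg (α := ℝ) k3]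
        linarith
      calc 1/(((k1 + k2 + k3 : ℕ):ℝ) + 1) ≤ 1/(1/|(inner ℝ v (X ω) : ℝ)|) :=
            one_div_le_one_div_of_le (one_div_pos.2 habs) h1
        _ = |(inner ℝ v (X ω) : ℝ)| := one_div_one_div _
    · show ‖X ω‖ ≤ ((k1 + k2 + k3 : ℕ):ℝ)
      have : (k2:ℝ) ≤ ((k1 + k2 + k3 : ℕ):ℝ) := by push_cast; linarith [Nat.cast_nonneg (α := ℝ) k1, Nat.cast_nonneg (α := ℝ) k3]
      linarith
    · show |Y ω| ≤ ((k1 + k2 + k3 : ℕ):ℝ)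
      have : (k3:ℝ) ≤ ((k1 + k2 + k3 : ℕ):ℝ) := by push_cast; linarith [Nat.cast_nonneg (α := ℝ) k1, Nat.cast_nonneg (α := ℝ) k2]
      linarith
  obtain ⟨k, hk⟩ : ∃ k, P (B k) ≠ 0 := by
    by_contra h; push_neg at h
    exact hScompl (measure_mono_null hsub (measure_iUnion_null h))
  have hBmeas : MeasurableSet (B k) :=
    ((measurableSet_le measurable_const hf.abs).inter
      (measurableSet_le hX.norm measurable_const)).inter
      (measurableSet_le hY.abs measurable_const)
  set δ : ℝ := 1/((k:ℝ)+1) with hδ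
  have hδpos : 0 < δ := by positivity
  set R : ℝ := (k:ℝ)+1 with hR
  have hRpos : 0 < R := by positivity
  set C : ℝ := (k:ℝ) with hC
  have hCnonneg : 0 ≤ C := Nat.cast_nonneg k
  -- the threshold for the value of φ
  set ε := P (B k) with hε
  have hεtop : ε ≠ ⊤ := measure_ne_top P _
  set M : ℝ := ((K:ℝ≥0∞)/ε).toReal + 1 with hM
  have hKlt : (K:ℝ≥0∞) < ENNReal.ofReal M * ε := by
    rw [← ENNReal.div_lt_iff (Or.inl hk) (Or.inl hεtop)]
    rw [ENNReal.lt_ofReal_iff_toReal_lt (ENNReal.div_lt_top ENNReal.coe_ne_top hk).ne]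
    exact lt_add_one _
  obtain ⟨T, hT⟩ := coer_aux φ hφcoer M
  set L : ℝ := 2*(|T| + C + 1)/δ with hL
  -- choose a good index
  have h2 : Tendsto (fun n => ‖θs (ψ (σ n))‖) atTop atTop :=
    hθ.comp ((hψmono.comp hσmono).tendsto_atTop)
  have h3 : ∀ᶠ n in atTop, ‖u (σ n) - v‖ < δ/(2*R) := by
    have := hσ.eventually (Metric.ball_mem_nhds v (show (0:ℝ) < δ/(2*R) by positivity))
    filter_upwards [this] with n hn
    rw [← dist_eq_norm]
    exact hn
  obtain ⟨n, hnL, hnv⟩ := ((h2.eventually_ge_atTop L).and h3).exists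
  set θ := θs (ψ (σ n)) with hθdef
  set r := ‖θ‖ with hr
  have hr1 : (1:ℝ) ≤ r := (hψ (σ n)).2
  have hrpos : 0 < r := lt_of_lt_of_le one_pos hr1
  have hinner : ∀ x : EuclideanSpace ℝ (Fin p),
      (inner ℝ θ x : ℝ) = r * (inner ℝ (u (σ n)) x : ℝ) := by
    intro x
    rw [hu]
    simp only
    rw [real_inner_smul_left]
    field_simp
    rw [← hθdef, ← hr]
    exact (mul_div_cancel_left₀ _ hrpos.ne').symm
  -- pointwise bound on B k
  have hpt : ∀ ω ∈ B k, M ≤ φ (Y ω - (inner ℝ θ (X ω) : ℝ)) := by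
    rintro ω ⟨⟨hω1, hω2⟩, hω3⟩
    simp only [Set.mem_setOf_eq] at hω1 hω2 hω3
    apply hT
    have hXR : ‖X ω‖ ≤ R := le_trans hω2 (by rw [hR]; linarith)
    have hdiff : |(inner ℝ (u (σ n)) (X ω) : ℝ) - (inner ℝ v (X ω) : ℝ)| ≤ δ/2 := by
      rw [← inner_sub_left]
      calc |(inner ℝ (u (σ n) - v) (X ω) : ℝ)| ≤ ‖u (σ n) - v‖ * ‖X ω‖ :=
            abs_real_inner_le_norm _ _
        _ ≤ (δ/(2*R)) * R := by
            apply mul_le_mul hnv.le hXR (norm_nonneg _) (by positivity)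
        _ = δ/2 := by field_simp
    have hω1' : δ ≤ |(inner ℝ v (X ω) : ℝ)| := hω1
    have hlow : δ/2 ≤ |(inner ℝ (u (σ n)) (X ω) : ℝ)| := by
      have := abs_sub_abs_le_abs_sub ((inner ℝ v (X ω) : ℝ)) ((inner ℝ (u (σ n)) (X ω) : ℝ))
      rw [abs_sub_comm] at hdiff
      linarith
    have hLδ : L * (δ/2) = |T| + C + 1 := by
      rw [hL]; field_simp
    have hbig : |T| + 1 ≤ |(inner ℝ θ (X ω) : ℝ)| - |Y ω| := by
      rw [hinner, abs_mul, abs_of_pos hrpos]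
      have hYC : |Y ω| ≤ C := hω3
      have h5 : L * (δ/2) ≤ r * |(inner ℝ (u (σ n)) (X ω) : ℝ)| := by
        apply mul_le_mul hnL hlow (by positivity) (le_of_lt (lt_of_lt_of_le one_pos hr1))
      rw [hLδ] at h5
      linarith
    have := abs_sub_abs_le_abs_sub ((inner ℝ θ (X ω) : ℝ)) (Y ω)
    rw [abs_sub_comm] at this
    calc T < |T| + 1 := by cases abs_cases T <;> linarith
      _ ≤ |(inner ℝ θ (X ω) : ℝ)| - |Y ω| := hbig
      _ ≤ |Y ω - (inner ℝ θ (X ω) : ℝ)| := this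
  -- integral lower bound
  have hint : ENNReal.ofReal M * ε ≤
      ∫⁻ ω, ENNReal.ofReal (φ (Y ω - (inner ℝ θ (X ω) : ℝ))) ∂P := by
    rw [hε, ← lintegral_indicator_const hBmeas (ENNReal.ofReal M)]
    apply lintegral_mono
    intro ω
    by_cases hωB : ω ∈ B k
    · rw [Set.indicator_of_mem hωB]
      exact ENNReal.ofReal_le_ofReal (hpt ω hωB)
    · rw [Set.indicator_of_notMem hωB]
      exact zero_le
  have hle : ∫⁻ ω, ENNReal.ofReal (φ (Y ω - (inner ℝ θ (X ω) : ℝ))) ∂P ≤ K :=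
    not_lt.1 (hψ (σ n)).1
  exact absurd (lt_of_lt_of_le hKlt hint) (not_lt.2 hle)
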